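/- arXiv:1801.05936 — 4 statements merged into one kernel-verified Lean document; each statement's English description precedes it below -/
import Mathlib

section
/- Let ν be a Borel measure on ℝ^d with ν({0}) = 0 and ∫ (1 ∧ |z|²) ν(dz) < ∞. Let Ψ : ℝ^d → ℝ^d be a continuous bijection with Ψ(0) ≠ 0, and let ν_n denote the restriction of ν to {|z| > 1/n}. Then there exists a constant C < ∞ (depending only on ν and Ψ) such that (ν_n ∧ (ν_n Ψ))(ℝ^d) ≤ C for all n ≥ 1, where (ν_n Ψ)(A) = ν_n(Ψ(A)). -/
open MeasureTheory
open scoped ENNReal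

lemma tail_finite {d : ℕ} (ν : Measure (EuclideanSpace ℝ (Fin d)))
    (hν2 : ∫⁻ z, ENNReal.ofReal (min 1 (‖z‖ ^ 2)) ∂ν < ⊤)
    {c : ℝ} (hc : 0 < c) : ν {z | c ≤ ‖z‖} < ⊤ := by
  set S : Set (EuclideanSpace ℝ (Fin d)) := {z | c ≤ ‖z‖}
  have hSm : MeasurableSet S := by
    have : IsClosed S := isClosed_le continuous_const continuous_norm
    exact this.measurableSet
  set k : ℝ≥0∞ := ENNReal.ofReal (min 1 (c ^ 2))
  have hk0 : k ≠ 0 := by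
    simp only [k, ne_eq, ENNReal.ofReal_eq_zero, not_le]
    positivity
  have hbound : k * ν S ≤ ∫⁻ z, ENNReal.ofReal (min 1 (‖z‖ ^ 2)) ∂ν := by
    have h1 : k * ν S = ∫⁻ _ in S, k ∂ν := (setLIntegral_const S k).symm
    rw [h1]
    refine le_trans (setLIntegral_mono ?_ ?_) (setLIntegral_le_lintegral S _)
    · exact ENNReal.measurable_ofReal.comp (continuous_const.min (continuous_norm.pow 2)).measurable
    · intro z hz
      refine ENNReal.ofReal_le_ofReal ?_
      have : c ^ 2 ≤ ‖z‖ ^ 2 := by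
        have := hz
        simp only [S, Set.mem_setOf_eq] at this
        nlinarith [norm_nonneg z]
      exact min_le_min le_rfl this
  by_contra h
  push_neg at h
  rw [top_le_iff.mp h, ENNReal.mul_top hk0] at hbound
  exact (lt_irrefl _ (lt_of_le_of_lt hbound hν2)).elim

/-- Let `ν` be a Lévy measure on `ℝ^d` (`ν {0} = 0`, `∫ (1 ∧ |z|²) dν < ∞`),
`Ψ` a continuous bijection of `ℝ^d` with `Ψ 0 ≠ 0`, and `ν_n` the restriction of `ν` to
`{|z| > 1/n}`. Then there is a finite constant `C` with
`(ν_n ∧ (ν_n Ψ))(ℝ^d) ≤ C` for all `n ≥ 1`, where `(ν_n Ψ)(A) = ν_n(Ψ(A))`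
(realised as `Measure.comap Ψ ν_n`). -/
theorem stmt2 (d : ℕ) (ν : Measure (EuclideanSpace ℝ (Fin d)))
    (hν0 : ν {0} = 0)
    (hν2 : ∫⁻ z, ENNReal.ofReal (min 1 (‖z‖ ^ 2)) ∂ν < ⊤)
    (Ψ : EuclideanSpace ℝ (Fin d) → EuclideanSpace ℝ (Fin d))
    (hΨc : Continuous Ψ) (hΨb : Function.Bijective Ψ) (hΨ0 : Ψ 0 ≠ 0) :
    ∃ C : ℝ≥0∞, C < ⊤ ∧ ∀ n : ℕ, 1 ≤ n →
      ((ν.restrict {z | 1 / (n : ℝ) < ‖z‖})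
        ⊓ Measure.comap Ψ (ν.restrict {z | 1 / (n : ℝ) < ‖z‖})) Set.univ ≤ C := by
  -- choose ε₀ via continuity of Ψ at 0
  have hc0 : (0 : ℝ) < ‖Ψ 0‖ / 2 := by
    have : 0 < ‖Ψ 0‖ := norm_pos_iff.mpr hΨ0
    linarith
  obtain ⟨ε₀, hε₀, hball⟩ := Metric.continuousAt_iff.mp (hΨc.continuousAt (x := 0))
    (‖Ψ 0‖ / 2) hc0
  set c₀ : ℝ := ‖Ψ 0‖ / 2
  have hΨlb : ∀ z : EuclideanSpace ℝ (Fin d), ‖z‖ < ε₀ → c₀ ≤ ‖Ψ z‖ := by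
    intro z hz
    have h1 : dist z 0 < ε₀ := by simpa [dist_zero_right] using hz
    have h2 : dist (Ψ z) (Ψ 0) < ‖Ψ 0‖ / 2 := hball h1
    have h3 : ‖Ψ z - Ψ 0‖ < ‖Ψ 0‖ / 2 := by simpa [dist_eq_norm] using h2
    have h4 := norm_sub_norm_le (Ψ 0) (Ψ z)
    have : ‖Ψ 0 - Ψ z‖ < ‖Ψ 0‖ / 2 := by rwa [norm_sub_rev]
    simp only [c₀]
    linarith
  have hemb : MeasurableEmbedding Ψ := hΨc.measurableEmbedding hΨb.injective
  set A : Set (EuclideanSpace ℝ (Fin d)) := {z | ‖z‖ < ε₀}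
  have hAm : MeasurableSet A := (isOpen_lt continuous_norm continuous_const).measurableSet
  refine ⟨ν {z | ε₀ ≤ ‖z‖} + ν {z | c₀ ≤ ‖z‖}, ?_, ?_⟩
  · exact ENNReal.add_lt_top.mpr ⟨tail_finite ν hν2 hε₀, tail_finite ν hν2 hc0⟩
  · intro n hn
    set νn := ν.restrict {z | 1 / (n : ℝ) < ‖z‖}
    set μ := νn ⊓ Measure.comap Ψ νn
    have hsplit : μ Set.univ ≤ μ Aᶜ + μ A := by
      have : (Set.univ : Set (EuclideanSpace ℝ (Fin d))) = Aᶜ ∪ A := by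
        simp
      rw [this]
      exact measure_union_le _ _
    have h1 : μ Aᶜ ≤ ν {z | ε₀ ≤ ‖z‖} := by
      have hle : μ Aᶜ ≤ νn Aᶜ := Measure.le_iff'.mp inf_le_left Aᶜ
      refine hle.trans ?_
      refine le_trans (Measure.le_iff'.mp Measure.restrict_le_self Aᶜ) ?_
      refine measure_mono ?_
      intro z hz
      simp only [A, Set.mem_compl_iff, Set.mem_setOf_eq, not_lt] at hz
      exact hz
    have h2 : μ A ≤ ν {z | c₀ ≤ ‖z‖} := by
      have hle : μ A ≤ (Measure.comap Ψ νn) A := Measure.le_iff'.mp inf_le_right A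
      refine hle.trans ?_
      rw [hemb.comap_apply]
      refine le_trans (Measure.le_iff'.mp Measure.restrict_le_self _) ?_
      refine measure_mono ?_
      rintro _ ⟨z, hz, rfl⟩
      exact hΨlb z hz
    calc μ Set.univ ≤ μ Aᶜ + μ A := hsplit
      _ ≤ ν {z | ε₀ ≤ ‖z‖} + ν {z | c₀ ≤ ‖z‖} := add_le_add h1 h2
end

section
/- Let ψ : [0,∞) → ℝ be continuous with ψ(0) = 0, three times differentiable on (0,∞) with ψ''' ≥ 0 on (0, 2]. Then for all r > 0 with 2r ≤ 2, ψ(2r) − 2ψ(r) ≤ ψ''(2r) · r². -/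
/-!
The mean value theorem, applied to `x ↦ ψ (x + r) - ψ x` on `[0, r]` and then to `ψ'` on
`[x, x + r]`, bounds the second difference `ψ (2r) - 2 ψ r + ψ 0` by `r²` times an upper bound
of `ψ''` on `(0, 2r)`. Since `ψ''' ≥ 0`, `ψ''` is monotone on `(0, 2]`, so `ψ'' (2r)` is such a bound.
-/

open Set

theorem second_difference_le_of_deriv_deriv_le {f : ℝ → ℝ} {a r C : ℝ} (hr : 0 ≤ r)
    (hf : ContinuousOn f (Icc a (a + 2 * r)))
    (hf' : DifferentiableOn ℝ f (Ioo a (a + 2 * r)))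
    (hf'' : DifferentiableOn ℝ (deriv f) (Ioo a (a + 2 * r)))
    (hC : ∀ x ∈ Ioo a (a + 2 * r), deriv (deriv f) x ≤ C) :
    f (a + 2 * r) - 2 * f (a + r) + f a ≤ C * r ^ 2 := by
  have hopen : IsOpen (Ioo a (a + 2 * r)) := isOpen_Ioo
  have hderiv_incr : ∀ x ∈ Ioo a (a + r), deriv f (x + r) - deriv f x ≤ C * r := by
    intro x hx
    have := (convex_Ioo a (a + 2 * r)).image_sub_le_mul_sub_of_deriv_le hf''.continuousOn
      (by rwa [hopen.interior_eq]) (by rwa [hopen.interior_eq]) x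
      ⟨hx.1, by linarith [hx.2]⟩ (x + r) ⟨by linarith [hx.1], by linarith [hx.2]⟩ (by linarith)
    simpa using this
  set g : ℝ → ℝ := fun x ↦ f (x + r) - f x
  have hg_deriv : ∀ x ∈ Ioo a (a + r), HasDerivAt g (deriv f (x + r) - deriv f x) x := by
    intro x hx
    have hx' : x ∈ Ioo a (a + 2 * r) := ⟨hx.1, by linarith [hx.2]⟩
    have hxr : x + r ∈ Ioo a (a + 2 * r) := ⟨by linarith [hx.1], by linarith [hx.2]⟩
    exact ((hf'.differentiableAt (hopen.mem_nhds hxr)).hasDerivAt.comp_add_const x r).sub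
      (hf'.differentiableAt (hopen.mem_nhds hx')).hasDerivAt
  have hg_cont : ContinuousOn g (Icc a (a + r)) :=
    (hf.comp (continuous_add_const r).continuousOn fun x hx ↦
      ⟨by linarith [hx.1], by linarith [hx.2]⟩).sub
      (hf.mono (Icc_subset_Icc_right (by linarith)))
  have := (convex_Icc a (a + r)).image_sub_le_mul_sub_of_deriv_le hg_cont
    (by rw [interior_Icc]; exact fun x hx ↦ (hg_deriv x hx).differentiableAt.differentiableWithinAt)
    (by rw [interior_Icc]; exact fun x hx ↦ (hg_deriv x hx).deriv ▸ hderiv_incr x hx)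
    a (left_mem_Icc.2 (by linarith)) (a + r) (right_mem_Icc.2 (by linarith)) (by linarith)
  simp only [g] at this
  rw [show a + r + r = a + 2 * r by ring, add_sub_cancel_left] at this
  linarith

/-- If `ψ` is continuous on `[0,∞)` with `ψ 0 = 0`, three times differentiable
on `(0,∞)` with `ψ''' ≥ 0` on `(0,2]`, then for `r > 0` with `2r ≤ 2` one has
`ψ(2r) − 2ψ(r) ≤ ψ''(2r) r²`. -/
theorem stmt5 (ψ : ℝ → ℝ)
    (hcont : ContinuousOn ψ (Set.Ici 0))
    (hψ0 : ψ 0 = 0)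
    (hdiff : ∀ x > (0:ℝ), DifferentiableAt ℝ ψ x)
    (hdiff2 : ∀ x > (0:ℝ), DifferentiableAt ℝ (deriv ψ) x)
    (hdiff3 : ∀ x > (0:ℝ), DifferentiableAt ℝ (deriv (deriv ψ)) x)
    (hthird : ∀ x, 0 < x → x ≤ 2 → 0 ≤ deriv (deriv (deriv ψ)) x) :
    ∀ r : ℝ, 0 < r → 2 * r ≤ 2 →
      ψ (2 * r) - 2 * ψ r ≤ deriv (deriv ψ) (2 * r) * r ^ 2 := by
  intro r hr hr2
  have hmono : MonotoneOn (deriv (deriv ψ)) (Ioc 0 2) :=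
    monotoneOn_of_deriv_nonneg (convex_Ioc 0 2)
      (fun x hx ↦ (hdiff3 x hx.1).continuousAt.continuousWithinAt)
      (fun x hx ↦ (hdiff3 x (interior_subset hx).1).differentiableWithinAt)
      (fun x hx ↦ hthird x (interior_subset hx).1 (interior_subset hx).2)
  have := second_difference_le_of_deriv_deriv_le (a := 0) hr.le
    (hcont.mono Icc_subset_Ici_self)
    (fun x hx ↦ (hdiff x hx.1).differentiableWithinAt)
    (fun x hx ↦ (hdiff2 x hx.1).differentiableWithinAt)
    (fun x hx ↦ hmono ⟨hx.1, by linarith [hx.2]⟩ ⟨by positivity, hr2⟩ (by linarith [hx.2]))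
  simpa [hψ0] using this
end

section
/- Let d ≥ 1, α ∈ (0,2), c₀ > 0, and suppose ν is a Borel measure on ℝ^d with ν(dz) ≤ c₀ |z|^{-(d+α)} dz. Let Λ ≥ 1 and let Ψ : ℝ^d → ℝ^d satisfy |Ψ(z)| ≥ (2Λ)^{-1} κ whenever |z| ≤ (2Λ³)^{-1} κ, for some κ > 0. Then there is a constant c₁ > 0 depending only on d, α, c₀, Λ such that (ν ∧ (νΨ))(ℝ^d) ≤ c₁ κ^{-α}, where (νΨ)(A) = ν(Ψ(A)). -/
/-!
Split `ℝ^d` into the closed ball `B` of radius `(2Λ³)⁻¹κ` and its complement. On `Bᶜ` bound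
`ν ⊓ νΨ` by `ν`; on `B` bound it by `νΨ`, so that `(νΨ)(B) = ν(Ψ(B))` and `Ψ(B)` lies outside
the ball of radius `(2Λ)⁻¹κ`. Both pieces are therefore tails `ν{ρ ≤ |z|}`, and the scaling
`z ↦ ρz` of the density `|z|^{-(d+α)}` shows that such a tail is `ρ^{-α}` times the tail at
radius `1`, which is finite because `d + α > d`.
-/

open MeasureTheory Set Module
open scoped ENNReal

section TailBound

variable {E : Type*} [NormedAddCommGroup E] [NormedSpace ℝ E] [MeasurableSpace E] [BorelSpace E]
  [FiniteDimensional ℝ E] (μ : Measure E) [μ.IsAddHaarMeasure]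

theorem lintegral_comp_smul_of_pos (f : E → ℝ≥0∞) {R : ℝ} (hR : 0 < R) :
    ∫⁻ x, f (R • x) ∂μ = ENNReal.ofReal (R ^ finrank ℝ E)⁻¹ * ∫⁻ x, f x ∂μ := by
  have hmap := μ.map_addHaar_smul hR.ne'
  rw [abs_of_pos (by positivity)] at hmap
  rw [← smul_eq_mul, ← lintegral_smul_measure, ← hmap]
  exact (lintegral_map_equiv f (MeasurableEquiv.smul₀ R hR.ne')).symm

theorem setLIntegral_norm_rpow_neg_setOf_le (s : ℝ) {r : ℝ} (hr : 0 < r) :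
    ∫⁻ z in {z : E | r ≤ ‖z‖}, ENNReal.ofReal (‖z‖ ^ (-s)) ∂μ =
      ENNReal.ofReal (r ^ ((finrank ℝ E : ℝ) - s)) *
        ∫⁻ z in {z : E | 1 ≤ ‖z‖}, ENNReal.ofReal (‖z‖ ^ (-s)) ∂μ := by
  set f : E → ℝ≥0∞ := fun z => ENNReal.ofReal (‖z‖ ^ (-s))
  have hmeas (ρ : ℝ) : MeasurableSet {z : E | ρ ≤ ‖z‖} :=
    measurableSet_le measurable_const measurable_norm
  have hscale (z : E) : {z : E | r ≤ ‖z‖}.indicator f (r • z) =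
      ENNReal.ofReal (r ^ (-s)) * {z : E | 1 ≤ ‖z‖}.indicator f z := by
    have hnorm : ‖r • z‖ = r * ‖z‖ := by rw [norm_smul, Real.norm_of_nonneg hr.le]
    by_cases hz : 1 ≤ ‖z‖
    · rw [indicator_of_mem (show r • z ∈ {z : E | r ≤ ‖z‖} by
          simp only [mem_ofPred_eq, hnorm]; exact le_mul_of_one_le_right hr.le hz),
        indicator_of_mem (show z ∈ {z : E | 1 ≤ ‖z‖} from hz)]
      simp only [f, hnorm, Real.mul_rpow hr.le (norm_nonneg z),
        ENNReal.ofReal_mul (by positivity : (0 : ℝ) ≤ r ^ (-s))]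
    · rw [indicator_of_notMem (show r • z ∉ {z : E | r ≤ ‖z‖} by
          simp only [mem_ofPred_eq, hnorm]; nlinarith),
        indicator_of_notMem (show z ∉ {z : E | 1 ≤ ‖z‖} from hz), mul_zero]
  have hpow_inv : ENNReal.ofReal (r ^ finrank ℝ E) * ENNReal.ofReal (r ^ finrank ℝ E)⁻¹ = 1 := by
    rw [← ENNReal.ofReal_mul (by positivity), mul_inv_cancel₀ (by positivity), ENNReal.ofReal_one]
  rw [← lintegral_indicator (hmeas r), ← lintegral_indicator (hmeas 1)]
  calc ∫⁻ z, {z : E | r ≤ ‖z‖}.indicator f z ∂μ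
      = ENNReal.ofReal (r ^ finrank ℝ E) * ∫⁻ z, {z : E | r ≤ ‖z‖}.indicator f (r • z) ∂μ := by
        rw [lintegral_comp_smul_of_pos μ _ hr, ← mul_assoc, hpow_inv, one_mul]
    _ = ENNReal.ofReal (r ^ finrank ℝ E) * ENNReal.ofReal (r ^ (-s)) *
          ∫⁻ z, {z : E | 1 ≤ ‖z‖}.indicator f z ∂μ := by
        simp_rw [hscale]
        rw [lintegral_const_mul' _ _ ENNReal.ofReal_ne_top, mul_assoc]
    _ = _ := by
        rw [← ENNReal.ofReal_mul (by positivity), ← Real.rpow_natCast, ← Real.rpow_add hr,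
          sub_eq_add_neg]

theorem setLIntegral_norm_rpow_neg_setOf_one_le_lt_top {s : ℝ} (hs : (finrank ℝ E : ℝ) < s) :
    ∫⁻ z in {z : E | 1 ≤ ‖z‖}, ENNReal.ofReal (‖z‖ ^ (-s)) ∂μ < ∞ := by
  have hs0 : 0 < s := (Nat.cast_nonneg _).trans_lt hs
  -- on `1 ≤ ‖z‖` we have `1 + ‖z‖ ≤ 2 ‖z‖`, reducing to the Japanese bracket
  have hbound : ∀ z ∈ {z : E | 1 ≤ ‖z‖},
      ENNReal.ofReal (‖z‖ ^ (-s)) ≤ ENNReal.ofReal (2 ^ s) * ENNReal.ofReal ((1 + ‖z‖) ^ (-s)) := by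
    intro z hz
    rw [← ENNReal.ofReal_mul (by positivity)]
    refine ENNReal.ofReal_le_ofReal ?_
    calc ‖z‖ ^ (-s) ≤ ((1 + ‖z‖) / 2) ^ (-s) :=
          Real.rpow_le_rpow_of_nonpos (by positivity) (by linarith [mem_ofPred_eq ▸ hz])
            (by linarith)
      _ = 2 ^ s * (1 + ‖z‖) ^ (-s) := by
          rw [Real.div_rpow (by positivity) zero_le_two, Real.rpow_neg zero_le_two, div_inv_eq_mul,
            mul_comm]
  calc ∫⁻ z in {z : E | 1 ≤ ‖z‖}, ENNReal.ofReal (‖z‖ ^ (-s)) ∂μ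
      ≤ ∫⁻ z, ENNReal.ofReal (2 ^ s) * ENNReal.ofReal ((1 + ‖z‖) ^ (-s)) ∂μ :=
        (setLIntegral_mono' (measurableSet_le measurable_const measurable_norm) hbound).trans
          (setLIntegral_le_lintegral _ _)
    _ < ∞ := by
        rw [lintegral_const_mul' _ _ ENNReal.ofReal_ne_top]
        exact ENNReal.mul_lt_top ENNReal.ofReal_lt_top (finite_integral_one_add_norm hs)

theorem exists_withDensity_norm_rpow_neg_setOf_le_le (c₀ : ℝ) {s : ℝ}
    (hs : (finrank ℝ E : ℝ) < s) :
    ∃ C > (0 : ℝ), ∀ r > (0 : ℝ),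
      μ.withDensity (fun z => ENNReal.ofReal (c₀ * ‖z‖ ^ (-s))) {z | r ≤ ‖z‖} ≤
        ENNReal.ofReal (C * r ^ ((finrank ℝ E : ℝ) - s)) := by
  set I := ∫⁻ z in {z : E | 1 ≤ ‖z‖}, ENNReal.ofReal (‖z‖ ^ (-s)) ∂μ
  have hI : ENNReal.ofReal c₀ * I ≠ ∞ :=
    ENNReal.mul_ne_top ENNReal.ofReal_ne_top
      (setLIntegral_norm_rpow_neg_setOf_one_le_lt_top μ hs).ne
  refine ⟨(ENNReal.ofReal c₀ * I).toReal + 1, by positivity, fun r hr => ?_⟩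
  calc μ.withDensity (fun z => ENNReal.ofReal (c₀ * ‖z‖ ^ (-s))) {z | r ≤ ‖z‖}
      = ENNReal.ofReal c₀ * I * ENNReal.ofReal (r ^ ((finrank ℝ E : ℝ) - s)) := by
        simp_rw [withDensity_apply _ (measurableSet_le measurable_const measurable_norm),
          ENNReal.ofReal_mul' (Real.rpow_nonneg (norm_nonneg _) _)]
        rw [lintegral_const_mul' _ _ ENNReal.ofReal_ne_top,
          setLIntegral_norm_rpow_neg_setOf_le μ s hr]
        ring
    _ ≤ _ := by
        rw [ENNReal.ofReal_mul (by positivity)]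
        gcongr
        exact (ENNReal.ofReal_toReal hI).ge.trans (ENNReal.ofReal_le_ofReal (by linarith))

end TailBound

theorem MeasureTheory.Measure.inf_apply_univ_le {α : Type*} [MeasurableSpace α]
    (ν ν' : Measure α) (s : Set α) : (ν ⊓ ν') univ ≤ ν' s + ν sᶜ :=
  calc (ν ⊓ ν') univ ≤ (ν ⊓ ν') s + (ν ⊓ ν') sᶜ := by
        rw [← union_compl_self s]; exact measure_union_le s sᶜ
    _ ≤ ν' s + ν sᶜ :=
        add_le_add (Measure.le_iff'.1 inf_le_right s) (Measure.le_iff'.1 inf_le_left sᶜ)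

theorem stmt9_general (d : ℕ) (α c₀ Λ : ℝ)
    (hα : 0 < α) (hΛ : 1 ≤ Λ) :
    ∃ c₁ > (0 : ℝ), ∀ (ν : Measure (EuclideanSpace ℝ (Fin d)))
      (Ψ : EuclideanSpace ℝ (Fin d) → EuclideanSpace ℝ (Fin d)) (κ : ℝ), 0 < κ →
      (ν ≤ volume.withDensity fun z => ENNReal.ofReal (c₀ * ‖z‖ ^ (-((d : ℝ) + α)))) →
      Function.Injective Ψ →
      (∀ s : Set (EuclideanSpace ℝ (Fin d)), MeasurableSet s → MeasurableSet (Ψ '' s)) →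
      (∀ z : EuclideanSpace ℝ (Fin d), ‖z‖ ≤ (2 * Λ ^ 3)⁻¹ * κ → (2 * Λ)⁻¹ * κ ≤ ‖Ψ z‖) →
      (ν ⊓ Measure.comap Ψ ν) Set.univ ≤ ENNReal.ofReal (c₁ * κ ^ (-α)) := by
  obtain ⟨C, hC, htail⟩ := exists_withDensity_norm_rpow_neg_setOf_le_le
    (volume : Measure (EuclideanSpace ℝ (Fin d))) c₀ (s := d + α) (by simpa using hα)
  have hΛ0 : 0 < Λ := zero_lt_one.trans_le hΛ
  refine ⟨C * ((2 * Λ) ^ α + (2 * Λ ^ 3) ^ α), by positivity,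
    fun ν Ψ κ hκ hν hinj hmeas hΨ => ?_⟩
  have hνtail : ∀ a > (0 : ℝ), ∀ t, (∀ z ∈ t, a⁻¹ * κ ≤ ‖z‖) →
      ν t ≤ ENNReal.ofReal (C * a ^ α * κ ^ (-α)) := by
    intro a ha t ht
    calc ν t ≤ ν {z | a⁻¹ * κ ≤ ‖z‖} := measure_mono ht
      _ ≤ _ := Measure.le_iff'.1 hν _
      _ ≤ _ := htail _ (by positivity)
      _ = _ := by
        rw [finrank_euclideanSpace_fin, show (d : ℝ) - (d + α) = -α by ring,
          Real.mul_rpow (by positivity) hκ.le, Real.inv_rpow ha.le, Real.rpow_neg ha.le, inv_inv,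
          mul_assoc]
  set B := Metric.closedBall (0 : EuclideanSpace ℝ (Fin d)) ((2 * Λ ^ 3)⁻¹ * κ)
  calc (ν ⊓ Measure.comap Ψ ν) univ ≤ Measure.comap Ψ ν B + ν Bᶜ :=
        Measure.inf_apply_univ_le _ _ B
    _ = ν (Ψ '' B) + ν Bᶜ := by rw [Measure.comap_apply Ψ hinj hmeas ν measurableSet_closedBall]
    _ ≤ ENNReal.ofReal (C * (2 * Λ) ^ α * κ ^ (-α)) +
          ENNReal.ofReal (C * (2 * Λ ^ 3) ^ α * κ ^ (-α)) := by
        gcongr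
        · refine hνtail _ (by positivity) _ ?_
          rintro _ ⟨z, hz, rfl⟩
          exact hΨ z (by simpa [B] using hz)
        · refine hνtail _ (by positivity) _ fun z hz => ?_
          simp only [B, mem_compl_iff, Metric.mem_closedBall, dist_zero_right, not_le] at hz
          exact hz.le
    _ = _ := by rw [← ENNReal.ofReal_add (by positivity) (by positivity)]; congr 1; ring

/-- If `ν(dz) ≤ c₀|z|^{-(d+α)} dz`, `Λ ≥ 1`, and `|Ψ(z)| ≥ (2Λ)⁻¹κ`
whenever `|z| ≤ (2Λ³)⁻¹κ`, then `(ν ∧ (νΨ))(ℝ^d) ≤ c₁ κ^{-α}` for a constant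
`c₁ > 0` depending only on `d, α, c₀, Λ`; here `(νΨ)(A) = ν(Ψ(A))` is realised as
`Measure.comap Ψ ν` (with `Ψ` injective mapping measurable sets to measurable sets). -/
theorem stmt9 (d : ℕ) (hd : 1 ≤ d) (α c₀ Λ : ℝ)
    (hα : 0 < α) (hα2 : α < 2) (hc₀ : 0 < c₀) (hΛ : 1 ≤ Λ) :
    ∃ c₁ > (0 : ℝ), ∀ (ν : Measure (EuclideanSpace ℝ (Fin d)))
      (Ψ : EuclideanSpace ℝ (Fin d) → EuclideanSpace ℝ (Fin d)) (κ : ℝ), 0 < κ →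
      (ν ≤ volume.withDensity fun z => ENNReal.ofReal (c₀ * ‖z‖ ^ (-((d : ℝ) + α)))) →
      Function.Injective Ψ →
      (∀ s : Set (EuclideanSpace ℝ (Fin d)), MeasurableSet s → MeasurableSet (Ψ '' s)) →
      (∀ z : EuclideanSpace ℝ (Fin d), ‖z‖ ≤ (2 * Λ ^ 3)⁻¹ * κ → (2 * Λ)⁻¹ * κ ≤ ‖Ψ z‖) →
      (ν ⊓ Measure.comap Ψ ν) Set.univ ≤ ENNReal.ofReal (c₁ * κ ^ (-α)) :=
  stmt9_general d α c₀ Λ hα hΛ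
end

section
/- Let α ∈ (1,2), θ > 0, β ∈ (0,1], and let ψ : (0, r₀] → ℝ be given by ψ(r) = r(1 − log^{-θ}(1/r)). Then for any constants c₄, c₅ > 0 there exist c₆ > 0 and r₁ ∈ (0, r₀] such that for all 0 < r ≤ r₁: c₁ r^{-α} · r² · ψ''(2r) + c₄ r^{1-α} ψ'(r) r + c₅ ψ'(r) r^β ≤ −c₆ r^{1-α} log^{-(1+θ)}(1/r), provided β > 1 − α (which holds automatically since α > 1 and β > 0) and c₁ > 0. -/
/-!
Write `ℓ(r) = log (1 / r)`. Then `ψ'(r) = 1 - ℓ^{-θ} - θ ℓ^{-(1+θ)} → 1` and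
`ψ''(r) = -(θ ℓ^{-(1+θ)} + θ (1+θ) ℓ^{-(2+θ)}) / r`, so the first term is at most
`-(c₁ θ / 2) r^{1-α} ℓ(r)^{-(1+θ)}`, using `ℓ(2r) ≤ ℓ(r)`. The other two terms are
`O(r^{2-α})` and `O(r^β)`, and any power `r^a` with `a > 1 - α` is `o(r^{1-α} ℓ(r)^{-(1+θ)})`:
powers beat logarithms. Hence `c₆ = c₁ θ / 4` works for small `r`.
-/

open Real Filter Topology Asymptotics Set

lemma tendsto_log_one_div_nhdsGT_zero :
    Tendsto (fun r : ℝ => log (1 / r)) (𝓝[>] 0) atTop := by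
  refine (tendsto_neg_atBot_atTop.comp tendsto_log_nhdsGT_zero).congr fun r => ?_
  rw [Function.comp_apply, one_div, log_inv]

lemma isLittleO_rpow_rpow_mul_log_one_div_rpow {a b : ℝ} (hba : b < a) (t : ℝ) :
    (fun r : ℝ => r ^ a) =o[𝓝[>] 0] fun r => r ^ b * log (1 / r) ^ t := by
  have hIoo : ∀ᶠ r in 𝓝[>] (0 : ℝ), r ∈ Ioo (0 : ℝ) 1 := Ioo_mem_nhdsGT one_pos
  have hlog := (isLittleO_abs_log_rpow_rpow_nhdsGT_zero (-t)
    (neg_lt_zero.2 (sub_pos.2 hba))).inv_rev <| hIoo.mono fun r hr h =>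
      absurd h (rpow_pos_of_pos (abs_pos.2 (log_neg hr.1 hr.2).ne) _).ne'
  refine ((isBigO_refl (fun r : ℝ => r ^ b) _).mul_isLittleO hlog).congr' ?_ ?_
  · filter_upwards [hIoo] with r hr
    rw [rpow_neg hr.1.le, inv_inv, ← rpow_add hr.1, add_sub_cancel]
  · filter_upwards [hIoo] with r hr
    rw [abs_of_neg (log_neg hr.1 hr.2), rpow_neg (neg_nonneg.2 (log_neg hr.1 hr.2).le), inv_inv,
      one_div, log_inv]

lemma hasDerivAt_log_one_div_rpow (p : ℝ) {x : ℝ} (hx : 0 < x) (hx1 : x < 1) :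
    HasDerivAt (fun r => log (1 / r) ^ p) (-p * log (1 / x) ^ (p - 1) / x) x := by
  have hlog : 0 < log (1 / x) := log_pos (by rwa [lt_div_iff₀ hx, one_mul])
  have hinner : HasDerivAt (fun r => log (1 / r)) (-x⁻¹) x := by
    simp only [one_div, log_inv]
    exact (hasDerivAt_log hx.ne').neg
  refine ((hasDerivAt_rpow_const (p := p) (Or.inl hlog.ne')).comp x hinner).congr_deriv ?_
  ring

section Psi

variable {θ : ℝ} {ψ : ℝ → ℝ}

lemma deriv_psi (hψ : ∀ r : ℝ, 0 < r → ψ r = r * (1 - log (1 / r) ^ (-θ)))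
    {x : ℝ} (hx : 0 < x) (hx1 : x < 1) :
    deriv ψ x = 1 - log (1 / x) ^ (-θ) - θ * log (1 / x) ^ (-(1 + θ)) := by
  have heq : ψ =ᶠ[𝓝 x] fun r => r * (1 - log (1 / r) ^ (-θ)) :=
    eventually_of_mem (Ioi_mem_nhds hx) hψ
  have hderiv : HasDerivAt (fun r => r * (1 - log (1 / r) ^ (-θ)))
      (1 - log (1 / x) ^ (-θ) - θ * log (1 / x) ^ (-(1 + θ))) x := by
    refine ((hasDerivAt_id' x).mul ((hasDerivAt_const x 1).sub
      (hasDerivAt_log_one_div_rpow (-θ) hx hx1))).congr_deriv ?_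
    rw [show -θ - 1 = -(1 + θ) by ring, Pi.sub_apply]
    field_simp
    ring
  rw [heq.deriv_eq, hderiv.deriv]

lemma deriv_deriv_psi (hψ : ∀ r : ℝ, 0 < r → ψ r = r * (1 - log (1 / r) ^ (-θ)))
    {x : ℝ} (hx : 0 < x) (hx1 : x < 1) :
    deriv (deriv ψ) x =
      -θ * log (1 / x) ^ (-(1 + θ)) / x - θ * (1 + θ) * log (1 / x) ^ (-(2 + θ)) / x := by
  have heq : deriv ψ =ᶠ[𝓝 x] fun r => 1 - log (1 / r) ^ (-θ) - θ * log (1 / r) ^ (-(1 + θ)) :=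
    eventually_of_mem (Ioo_mem_nhds hx hx1) fun y hy => deriv_psi hψ hy.1 hy.2
  have hderiv : HasDerivAt (fun r => 1 - log (1 / r) ^ (-θ) - θ * log (1 / r) ^ (-(1 + θ)))
      (-θ * log (1 / x) ^ (-(1 + θ)) / x - θ * (1 + θ) * log (1 / x) ^ (-(2 + θ)) / x) x := by
    refine (((hasDerivAt_const x 1).sub (hasDerivAt_log_one_div_rpow (-θ) hx hx1)).sub
      ((hasDerivAt_log_one_div_rpow (-(1 + θ)) hx hx1).const_mul θ)).congr_deriv ?_
    rw [show -θ - 1 = -(1 + θ) by ring, show -(1 + θ) - 1 = -(2 + θ) by ring]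
    ring
  rw [heq.deriv_eq, hderiv.deriv]

lemma tendsto_deriv_psi (hψ : ∀ r : ℝ, 0 < r → ψ r = r * (1 - log (1 / r) ^ (-θ)))
    (hθ : 0 < θ) : Tendsto (deriv ψ) (𝓝[>] 0) (𝓝 1) := by
  have hpow {s : ℝ} (hs : 0 < s) : Tendsto (fun r : ℝ => log (1 / r) ^ (-s)) (𝓝[>] 0) (𝓝 0) :=
    (tendsto_rpow_neg_atTop hs).comp tendsto_log_one_div_nhdsGT_zero
  have hlim := ((tendsto_const_nhds (x := (1 : ℝ))).sub (hpow hθ)).sub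
    ((hpow (by linarith : 0 < 1 + θ)).const_mul θ)
  rw [mul_zero, sub_zero, sub_zero] at hlim
  refine hlim.congr' ?_
  filter_upwards [Ioo_mem_nhdsGT one_pos] with r hr
  exact (deriv_psi hψ hr.1 hr.2).symm

lemma mul_deriv_deriv_psi_two_mul_le (hψ : ∀ r : ℝ, 0 < r → ψ r = r * (1 - log (1 / r) ^ (-θ)))
    (hθ : 0 ≤ θ) (α : ℝ) {c r : ℝ} (hc : 0 ≤ c) (hr : 0 < r) (hr1 : 2 * r < 1) :
    c * r ^ (-α) * r ^ 2 * deriv (deriv ψ) (2 * r)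
      ≤ -(c * θ / 2) * (r ^ (1 - α) * log (1 / r) ^ (-(1 + θ))) := by
  have hL : 0 < log (1 / (2 * r)) := log_pos (by rwa [lt_div_iff₀ (by positivity), one_mul])
  have hLl : log (1 / (2 * r)) ≤ log (1 / r) :=
    log_le_log (by positivity) (one_div_le_one_div_of_le hr (by linarith))
  have hmono : log (1 / r) ^ (-(1 + θ)) ≤ log (1 / (2 * r)) ^ (-(1 + θ)) :=
    rpow_le_rpow_of_nonpos hL hLl (by linarith)
  have hψ'' : deriv (deriv ψ) (2 * r) ≤ -θ * log (1 / r) ^ (-(1 + θ)) / (2 * r) := by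
    rw [deriv_deriv_psi hψ (by positivity) hr1, div_sub_div_same,
      div_le_div_iff_of_pos_right (by positivity)]
    have : 0 ≤ θ * (1 + θ) * log (1 / (2 * r)) ^ (-(2 + θ)) := by
      have := rpow_nonneg hL.le (-(2 + θ))
      positivity
    nlinarith
  have hcoef : c * r ^ (-α) * r ^ 2 = r * (c * r ^ (1 - α)) := by
    rw [show 1 - α = -α + 1 by ring, rpow_add_one hr.ne']
    ring
  calc c * r ^ (-α) * r ^ 2 * deriv (deriv ψ) (2 * r)
      ≤ c * r ^ (-α) * r ^ 2 * (-θ * log (1 / r) ^ (-(1 + θ)) / (2 * r)) :=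
        mul_le_mul_of_nonneg_left hψ'' (by positivity)
    _ = -(c * θ / 2) * (r ^ (1 - α) * log (1 / r) ^ (-(1 + θ))) := by
        rw [hcoef]
        field_simp

lemma isLittleO_lower_order_terms (hψ : ∀ r : ℝ, 0 < r → ψ r = r * (1 - log (1 / r) ^ (-θ)))
    (hθ : 0 < θ) {α β : ℝ} (hαβ : 1 - α < β) (c₄ c₅ : ℝ) :
    (fun r => c₄ * r ^ (1 - α) * deriv ψ r * r + c₅ * deriv ψ r * r ^ β)
      =o[𝓝[>] 0] fun r => r ^ (1 - α) * log (1 / r) ^ (-(1 + θ)) := by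
  have hψ' : deriv ψ =O[𝓝[>] 0] fun _ => (1 : ℝ) := (tendsto_deriv_psi hψ hθ).isBigO_one ℝ
  have h₄ := ((hψ'.mul_isLittleO (isLittleO_rpow_rpow_mul_log_one_div_rpow
    (by linarith : 1 - α < 2 - α) (-(1 + θ)))).const_mul_left c₄)
  have h₅ := ((hψ'.mul_isLittleO (isLittleO_rpow_rpow_mul_log_one_div_rpow
    hαβ (-(1 + θ)))).const_mul_left c₅)
  refine ((h₄.add h₅).congr_right fun r => one_mul _).congr' ?_ EventuallyEq.rfl
  filter_upwards [self_mem_nhdsWithin] with r (hr : 0 < r)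
  rw [show 2 - α = 1 - α + 1 by ring, rpow_add_one hr.ne']
  ring

end Psi

theorem stmt15_general (α θ β r₀ : ℝ) (hα : 1 < α) (hθ : 0 < θ)
    (hβ : 0 < β) (hr₀ : 0 < r₀)
    (c₁ c₄ c₅ : ℝ) (hc₁ : 0 < c₁)
    (ψ : ℝ → ℝ) (hψ : ∀ r : ℝ, 0 < r → ψ r = r * (1 - Real.log (1 / r) ^ (-θ))) :
    ∃ c₆ > (0 : ℝ), ∃ r₁ : ℝ, 0 < r₁ ∧ r₁ ≤ r₀ ∧ ∀ r : ℝ, 0 < r → r ≤ r₁ →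
      c₁ * r ^ (-α) * r ^ 2 * deriv (deriv ψ) (2 * r)
        + c₄ * r ^ (1 - α) * deriv ψ r * r
        + c₅ * deriv ψ r * r ^ β
      ≤ -c₆ * r ^ (1 - α) * Real.log (1 / r) ^ (-(1 + θ)) := by
  have hsmall := (isLittleO_lower_order_terms hψ hθ (by linarith : 1 - α < β) c₄ c₅).bound
    (by positivity : 0 < c₁ * θ / 4)
  have hhalf : ∀ᶠ r in 𝓝[>] (0 : ℝ), r < 1 / 2 :=
    eventually_nhdsWithin_of_eventually_nhds (eventually_lt_nhds (by norm_num))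
  obtain ⟨u, hu, hsub⟩ := mem_nhdsGT_iff_exists_Ioc_subset.1 (hhalf.and hsmall)
  refine ⟨c₁ * θ / 4, by positivity, min u r₀, lt_min hu hr₀, min_le_right _ _,
    fun r hr hru => ?_⟩
  obtain ⟨hr2, hbound⟩ := hsub ⟨hr, hru.trans (min_le_left _ _)⟩
  have hlead := mul_deriv_deriv_psi_two_mul_le hψ hθ.le α hc₁.le hr (by linarith)
  have hf : 0 ≤ r ^ (1 - α) * log (1 / r) ^ (-(1 + θ)) :=
    mul_nonneg (rpow_nonneg hr.le _)
      (rpow_nonneg (log_nonneg (one_le_one_div hr (by linarith))) _)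
  rw [norm_of_nonneg hf] at hbound
  linarith [le_norm_self (c₄ * r ^ (1 - α) * deriv ψ r * r + c₅ * deriv ψ r * r ^ β)]

/-- For `ψ(r) = r(1 − log^{-θ}(1/r))`, `α ∈ (1,2)`, `θ > 0`, `β ∈ (0,1]`
and any constants `c₁, c₄, c₅ > 0`, there exist `c₆ > 0` and `r₁ ∈ (0, r₀]` such that for
all `0 < r ≤ r₁`:
`c₁ r^{-α} r² ψ''(2r) + c₄ r^{1-α} ψ'(r) r + c₅ ψ'(r) r^β ≤ −c₆ r^{1-α} log^{-(1+θ)}(1/r)`. -/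
theorem stmt15 (α θ β r₀ : ℝ) (hα : 1 < α) (hα2 : α < 2) (hθ : 0 < θ)
    (hβ : 0 < β) (hβ1 : β ≤ 1) (hr₀ : 0 < r₀)
    (c₁ c₄ c₅ : ℝ) (hc₁ : 0 < c₁) (hc₄ : 0 < c₄) (hc₅ : 0 < c₅)
    (ψ : ℝ → ℝ) (hψ : ∀ r : ℝ, 0 < r → ψ r = r * (1 - Real.log (1 / r) ^ (-θ))) :
    ∃ c₆ > (0 : ℝ), ∃ r₁ : ℝ, 0 < r₁ ∧ r₁ ≤ r₀ ∧ ∀ r : ℝ, 0 < r → r ≤ r₁ →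
      c₁ * r ^ (-α) * r ^ 2 * deriv (deriv ψ) (2 * r)
        + c₄ * r ^ (1 - α) * deriv ψ r * r
        + c₅ * deriv ψ r * r ^ β
      ≤ -c₆ * r ^ (1 - α) * Real.log (1 / r) ^ (-(1 + θ)) :=
  stmt15_general α θ β r₀ hα hθ hβ hr₀ c₁ c₄ c₅ hc₁ ψ hψ
end
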